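/- Let G be the symmetric 4×4 matrix with rows (2, −1, 0, 0), (−1, 2, −1, 0), (0, −1, 1, −1/2), (0, 0, −1/2, 1). For a column vector β ∈ ℚ⁴ with βᵀGβ ≠ 0, let R_β be the linear map v ↦ v − (2·βᵀGv/(βᵀGβ))·β. Let e₁, …, e₄ be the standard basis vectors and set σ = R_{e₁} ∘ R_{e₃+e₄} ∘ R_{e₂} ∘ R_{e₁+e₂+e₃}. Let ζ = exp(2πi/24) and let Λ ∈ ℂ⁴ be the vector (ζ, ζ + ζ⁻³, 2ζ, 2ζ). Then σΛ = exp(2πi/6)·Λ. -/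
import Mathlib


open Matrix

/-- The Gram matrix of the simple roots of `F₄` in Bourbaki numbering, normalized with
`α₁² = α₂² = 2` and `α₃² = α₄² = 1`. -/
noncomputable def F4GramMatrix : Matrix (Fin 4) (Fin 4) ℂ :=
  !![2, -1, 0, 0;
     -1, 2, -1, 0;
     0, -1, 1, -1/2;
     0, 0, -1/2, 1]

/-- The reflection `v ↦ v − (2 βᵀGv / (βᵀGβ))·β` in a root `β`. -/
noncomputable def F4Reflect (β : Fin 4 → ℂ) (v : Fin 4 → ℂ) : Fin 4 → ℂ :=
  v - (2 * (β ⬝ᵥ F4GramMatrix.mulVec v) / (β ⬝ᵥ F4GramMatrix.mulVec β)) • β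

/-- The standard basis vector `eᵢ` of `ℂ⁴`. -/
noncomputable def F4e (i : Fin 4) : Fin 4 → ℂ := Pi.single i 1

/-- The Weyl group element `σ = r_{α₁} r_{α₃+α₄} r_{α₂} r_{α₁+α₂+α₃}`
of the conjugacy class `F₄(a₁)`. -/
noncomputable def F4sigma : (Fin 4 → ℂ) → (Fin 4 → ℂ) :=
  F4Reflect (F4e 0) ∘ F4Reflect (F4e 2 + F4e 3) ∘ F4Reflect (F4e 1) ∘
    F4Reflect (F4e 0 + F4e 1 + F4e 2)

theorem F4refl1 (v : Fin 4 → ℂ) : F4Reflect (F4e 0 + F4e 1 + F4e 2) v =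
    ![-v 0 + v 3, -2 * v 0 + v 1 + v 3, -2 * v 0 + v 2 + v 3, v 3] := by
  funext i
  fin_cases i <;>
  · simp [F4Reflect, F4e, F4GramMatrix, Matrix.mulVec, dotProduct, Fin.sum_univ_four,
      Pi.single_apply, Matrix.vecHead, Matrix.vecTail]
    try ring

theorem F4refl2 (v : Fin 4 → ℂ) : F4Reflect (F4e 1) v =
    ![v 0, v 0 - v 1 + v 2, v 2, v 3] := by
  funext i
  fin_cases i <;>
  · simp [F4Reflect, F4e, F4GramMatrix, Matrix.mulVec, dotProduct, Fin.sum_univ_four,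
      Pi.single_apply, Matrix.vecHead, Matrix.vecTail]
    try ring

theorem F4refl3 (v : Fin 4 → ℂ) : F4Reflect (F4e 2 + F4e 3) v =
    ![v 0, v 1, 2 * v 1 - v 3, 2 * v 1 - v 2] := by
  funext i
  fin_cases i <;>
  · simp [F4Reflect, F4e, F4GramMatrix, Matrix.mulVec, dotProduct, Fin.sum_univ_four,
      Pi.single_apply, Matrix.vecHead, Matrix.vecTail]
    try ring

theorem F4refl4 (v : Fin 4 → ℂ) : F4Reflect (F4e 0) v =
    ![-v 0 + v 1, v 1, v 2, v 3] := by
  funext i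
  fin_cases i <;>
  · simp [F4Reflect, F4e, F4GramMatrix, Matrix.mulVec, dotProduct, Fin.sum_univ_four,
      Pi.single_apply, Matrix.vecHead, Matrix.vecTail]
    try ring


/-- The explicit vector `Λ₊` is an eigenvector of `σ` with eigenvalue `e^{2πi/6}`. -/
theorem stmt15 (ζ : ℂ) (hζ : ζ = Complex.exp (2 * Real.pi * Complex.I / 24))
    (Λ : Fin 4 → ℂ)
    (hΛ : Λ = ![ζ, ζ + ζ ^ (-3 : ℤ), 2 * ζ, 2 * ζ]) :
    F4sigma Λ = Complex.exp (2 * Real.pi * Complex.I / 6) • Λ := by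

  have h4 : ζ ^ 4 = 1 / 2 + (Real.sqrt 3 / 2 : ℝ) * Complex.I := by
    rw [hζ, ← Complex.exp_nat_mul]
    have : (4 : ℕ) * (2 * Real.pi * Complex.I / 24) = (Real.pi / 3 : ℝ) * Complex.I := by
      push_cast; ring
    rw [this, Complex.exp_mul_I]
    rw [← Complex.ofReal_cos, ← Complex.ofReal_sin, Real.cos_pi_div_three,
      Real.sin_pi_div_three]
    push_cast; ring
  have hrel : ζ ^ 8 - ζ ^ 4 + 1 = 0 := by
    have h8 : ζ ^ 8 = (ζ ^ 4) ^ 2 := by ring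
    have hs : (Real.sqrt 3 : ℂ) ^ 2 = 3 := by
      rw [← Complex.ofReal_pow, Real.sq_sqrt (by norm_num : (3:ℝ) ≥ 0)]; norm_num
    rw [h8, h4]
    push_cast
    linear_combination ((Real.sqrt 3 : ℂ) ^ 2 / 4) * Complex.I_sq - (1 / 4 : ℂ) * hs
  have h24 : ζ ^ 24 = 1 := by
    linear_combination (ζ ^ 16 + ζ ^ 12 - ζ ^ 4 - 1) * hrel
  have hm3 : ζ ^ (-3 : ℤ) = ζ ^ 21 := by
    rw [_root_.zpow_neg, show ((3:ℤ) = (3:ℕ)) from rfl, zpow_natCast]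
    exact inv_eq_of_mul_eq_one_left (by linear_combination h24)
  have hev : Complex.exp (2 * Real.pi * Complex.I / 6) = ζ ^ 4 := by
    rw [hζ, ← Complex.exp_nat_mul]
    congr 1
    push_cast; ring
  subst hΛ
  rw [hev]
  simp only [F4sigma, Function.comp_apply, F4refl1, F4refl2, F4refl3, F4refl4]
  funext i
  fin_cases i <;>
  · simp [hm3]
    first
    | linear_combination (-ζ^13 - ζ^9 + ζ) * hrel
    | linear_combination (-ζ^17 - 2*ζ^13 - ζ^9 + ζ^5 + 2*ζ) * hrel
    | linear_combination (-2*ζ^13 - 2*ζ^9 + 2*ζ) * hrel
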